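/- arXiv:2001.04243 — 5 statements merged into one kernel-verified Lean document; each statement's English description precedes it below -/
import Mathlib

section
/- Let K ≥ 2, Y = {1,...,K}, fix 1 ≤ c ≤ K−1, and let q : Y → ℝ be a nonnegative function. Define p̄(S) = (1/C(K−1,c)) · Σ_{y ∉ S} q(y) for each c-element subset S of Y. Then for every y ∈ Y: q(y) = Σ_{S : |S|=c} p̄(S) − ((K−1)/c) · Σ_{S : |S|=c, y∈S} p̄(S). -/
/-!
Write `N = C(K-1, c)`. Each `q z` is counted once for every `c`-set avoiding `z`, so
`∑_S p̄(S) = ∑_z q z`. The `c`-sets containing `y` are `insert y T` for the `(c-1)`-subsets `T`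
of `Y \ {y}`, so the same double count gives
`∑_{S ∋ y} p̄(S) = C(K-2, c-1) / N · ∑_{z ≠ y} q z`, and `(K-1) · C(K-2, c-1) = c · N` makes the
weight `(K-1)/c` cancel this factor.
-/

open Finset

namespace Finset

variable {α M : Type*} [DecidableEq α] [AddCommMonoid M]

theorem sum_powersetCard_sum_sdiff (s : Finset α) (k : ℕ) (f : α → M) :
    ∑ T ∈ s.powersetCard k, ∑ z ∈ s \ T, f z = (#s - 1).choose k • ∑ z ∈ s, f z := by
  rw [sum_comm' (t' := s) (s' := fun z => (s.erase z).powersetCard k), smul_sum]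
  · refine sum_congr rfl fun z hz => ?_
    rw [sum_const, card_powersetCard, card_erase_of_mem hz]
  · intro T z
    simp only [mem_powersetCard, mem_sdiff, subset_erase]
    tauto

theorem sum_powersetCard_succ_filter_mem {y : α} {s : Finset α} (hy : y ∈ s) (k : ℕ)
    (g : Finset α → M) :
    ∑ S ∈ (s.powersetCard (k + 1)).filter (y ∈ ·), g (s \ S)
      = ∑ T ∈ (s.erase y).powersetCard k, g (s.erase y \ T) := by
  refine sum_nbij' (erase · y) (insert y) ?_ ?_ ?_ ?_ ?_
  · simp only [mem_filter, mem_powersetCard]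
    rintro S ⟨⟨hsub, hcard⟩, hyS⟩
    exact ⟨erase_subset_erase y hsub, by rw [card_erase_of_mem hyS, hcard, Nat.add_sub_cancel]⟩
  · simp only [mem_filter, mem_powersetCard, subset_erase]
    rintro T ⟨⟨hsub, hyT⟩, hcard⟩
    exact ⟨⟨insert_subset hy hsub, by rw [card_insert_of_notMem hyT, hcard]⟩,
      mem_insert_self y T⟩
  · simp only [mem_filter]
    exact fun S hS => insert_erase hS.2
  · simp only [mem_powersetCard, subset_erase]
    exact fun T hT => erase_insert hT.1.2
  · simp only [mem_filter]
    rintro S ⟨-, hyS⟩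
    rw [← erase_sdiff_distrib, erase_eq_of_notMem fun h => (mem_sdiff.1 h).2 hyS]

end Finset

theorem stmt_3_general (K : ℕ) (c : ℕ) (hc1 : 1 ≤ c) (hc2 : c ≤ K - 1)
    (q : Fin K → ℝ) (y : Fin K) :
    q y = (∑ S ∈ Finset.univ.powersetCard c,
            (((K - 1).choose c : ℝ))⁻¹ * ∑ z ∈ Sᶜ, q z)
        - (((K : ℝ) - 1) / (c : ℝ)) *
            ∑ S ∈ (Finset.univ.powersetCard c).filter (fun S => y ∈ S),
              (((K - 1).choose c : ℝ))⁻¹ * ∑ z ∈ Sᶜ, q z := by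
  obtain ⟨k, rfl⟩ : ∃ k, c = k + 1 := ⟨c - 1, by omega⟩
  have hN : ((K - 1).choose (k + 1) : ℝ) ≠ 0 := by exact_mod_cast (Nat.choose_pos hc2).ne'
  have hchoose : ((K : ℝ) - 1) * (K - 2).choose k = (K - 1).choose (k + 1) * (k + 1) := by
    have := Nat.add_one_mul_choose_eq (K - 2) k
    rw [show K - 2 + 1 = K - 1 by omega] at this
    rw [show (K : ℝ) - 1 = ((K - 1 : ℕ) : ℝ) by push_cast [show 1 ≤ K by omega]; ring]
    exact_mod_cast this
  have hweight :
      ((K : ℝ) - 1) / (k + 1) * (((K - 1).choose (k + 1) : ℝ)⁻¹ * (K - 2).choose k) = 1 := by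
    field_simp
    linear_combination hchoose
  simp_rw [← mul_sum, compl_eq_univ_sdiff]
  rw [sum_powersetCard_sum_sdiff,
    sum_powersetCard_succ_filter_mem (mem_univ y) k (fun T => ∑ z ∈ T, q z),
    sum_powersetCard_sum_sdiff, card_erase_of_mem (mem_univ y), card_univ, Fintype.card_fin,
    ← add_sum_erase univ q (mem_univ y), nsmul_eq_mul, nsmul_eq_mul,
    show K - 1 - 1 = K - 2 by omega]
  push_cast
  rw [inv_mul_cancel_left₀ hN]
  linear_combination (∑ z ∈ univ.erase y, q z) * hweight

theorem stmt_3 (K : ℕ) (hK : 2 ≤ K) (c : ℕ) (hc1 : 1 ≤ c) (hc2 : c ≤ K - 1)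
    (q : Fin K → ℝ) (hq : ∀ y, 0 ≤ q y) (y : Fin K) :
    q y = (∑ S ∈ Finset.univ.powersetCard c,
            (((K - 1).choose c : ℝ))⁻¹ * ∑ z ∈ Sᶜ, q z)
        - (((K : ℝ) - 1) / (c : ℝ)) *
            ∑ S ∈ (Finset.univ.powersetCard c).filter (fun S => y ∈ S),
              (((K - 1).choose c : ℝ))⁻¹ * ∑ z ∈ Sᶜ, q z :=
  stmt_3_general K c hc1 hc2 q y
end

section
/- Let K ≥ 2, Y = {1,...,K}, fix 1 ≤ c ≤ K−1, let q : Y → ℝ be nonnegative with p̄(S) = (1/C(K−1,c)) · Σ_{y∉S} q(y) for c-element subsets S, and let ℓ : Y → ℝ be any function (interpreted as ℓ(y) = loss of a fixed prediction w.r.t. label y). Define the multi-complementary loss ℓ̄(S) = Σ_{y∈Y} ℓ(y) − ((K−1)/c) · Σ_{y∈S} ℓ(y). Then Σ_{y∈Y} ℓ(y)·q(y) = Σ_{S : |S|=c} ℓ̄(S)·p̄(S). -/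
/-!
Expanding `p̄`, the right-hand side is a combination of `∑_S ∑_{z ∉ S} q z` and
`∑_S (∑_{y ∈ S} ℓ y) (∑_{z ∉ S} q z)`. Swapping the order of summation, each label lies outside
`C(K-1, c)` of the `c`-subsets, and each ordered pair `y ≠ z` is separated (`y ∈ S`, `z ∉ S`) by
`C(K-2, c-1)` of them. Since `(K-1) C(K-2, c-1) = c C(K-1, c)`, the weight `(K-1)/c` turns the
second sum into exactly the off-diagonal part of `(∑ ℓ)(∑ q)`, leaving `∑ ℓ y q y`.
-/

open Finset

namespace Finset

variable {α : Type*} [DecidableEq α]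

theorem powersetCard_filter_notMem (s : Finset α) (a : α) (c : ℕ) :
    {S ∈ s.powersetCard c | a ∉ S} = (s.erase a).powersetCard c := by
  ext S
  simp only [mem_filter, mem_powersetCard, subset_erase]
  tauto

variable [Fintype α]

theorem card_powersetCard_univ_filter_notMem (a : α) (c : ℕ) :
    #{S ∈ univ.powersetCard c | a ∉ S} = (Fintype.card α - 1).choose c := by
  rw [powersetCard_filter_notMem, card_powersetCard, card_erase_of_mem (mem_univ a), card_univ]

theorem card_powersetCard_univ_filter_mem_notMem {a b : α} (hab : a ≠ b) {c : ℕ} (hc : 1 ≤ c) :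
    #{S ∈ univ.powersetCard c | a ∈ S ∧ b ∉ S} = (Fintype.card α - 2).choose (c - 1) := by
  have hsub : {a} ⊆ (univ : Finset α).erase b := by simpa using hab
  have hpair : {S ∈ (univ : Finset α).powersetCard c | a ∈ S ∧ b ∉ S}
      = {S ∈ (univ.erase b).powersetCard c | {a} ⊆ S} := by
    rw [← powersetCard_filter_notMem, filter_filter]
    simp only [singleton_subset_iff, and_comm]
  rw [hpair, card_filter_powersetCard_subset _ _ _ hsub (by simpa using hc),
    card_erase_of_mem (mem_univ b), card_univ, card_singleton, Nat.sub_sub]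

theorem sum_powersetCard_univ_sum_compl {M : Type*} [AddCommMonoid M] (c : ℕ) (f : α → M) :
    ∑ S ∈ univ.powersetCard c, ∑ z ∈ Sᶜ, f z = (Fintype.card α - 1).choose c • ∑ z, f z := by
  rw [sum_comm' (t' := univ) (s' := fun z => {S ∈ univ.powersetCard c | z ∉ S})
    (by simp)]
  simp only [sum_const, card_powersetCard_univ_filter_notMem, smul_sum]

theorem sum_powersetCard_univ_sum_sum_compl {M : Type*} [AddCommMonoid M] {c : ℕ} (hc : 1 ≤ c)
    (F : α → α → M) :
    ∑ S ∈ univ.powersetCard c, ∑ y ∈ S, ∑ z ∈ Sᶜ, F y z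
      = (Fintype.card α - 2).choose (c - 1) • ∑ y, ∑ z ∈ {y}ᶜ, F y z := by
  rw [sum_comm' (t' := univ) (s' := fun y => {S ∈ univ.powersetCard c | y ∈ S}) (by simp),
    smul_sum]
  refine sum_congr rfl fun y _ => ?_
  rw [sum_comm' (t' := {y}ᶜ) (s' := fun z => {S ∈ univ.powersetCard c | y ∈ S ∧ z ∉ S})
    (by intro S z; simp only [mem_filter, mem_compl, mem_singleton]; grind), smul_sum]
  refine sum_congr rfl fun z hz => ?_
  rw [sum_const, card_powersetCard_univ_filter_mem_notMem (by simpa [eq_comm] using hz) hc]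

end Finset

theorem stmt_4_general (K : ℕ) (c : ℕ) (hc1 : 1 ≤ c) (hc2 : c ≤ K - 1)
    (q : Fin K → ℝ) (ℓ : Fin K → ℝ) :
    (∑ y, ℓ y * q y)
      = ∑ S ∈ Finset.univ.powersetCard c,
          ((∑ y, ℓ y) - (((K : ℝ) - 1) / (c : ℝ)) * ∑ y ∈ S, ℓ y) *
            ((((K - 1).choose c : ℝ))⁻¹ * ∑ z ∈ Sᶜ, q z) := by
  have hN : ((K - 1).choose c : ℝ) ≠ 0 := by exact_mod_cast (Nat.choose_pos hc2).ne'
  have hc : (c : ℝ) ≠ 0 := by exact_mod_cast (by omega : c ≠ 0)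
  have hbinom : ((K : ℝ) - 1) * (K - 2).choose (c - 1) = (K - 1).choose c * c := by
    obtain ⟨n, rfl⟩ : ∃ n, K = n + 2 := ⟨K - 2, by omega⟩
    obtain ⟨k, rfl⟩ : ∃ k, c = k + 1 := ⟨c - 1, by omega⟩
    rw [← Nat.cast_pred (by omega)]
    exact_mod_cast Nat.add_one_mul_choose_eq n k
  have hcompl : ∑ S ∈ univ.powersetCard c, ∑ z ∈ Sᶜ, q z
      = (K - 1).choose c * ∑ z, q z := by
    rw [sum_powersetCard_univ_sum_compl, Fintype.card_fin, nsmul_eq_mul]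
  have hmixed : ∑ S ∈ univ.powersetCard c, (∑ y ∈ S, ℓ y) * ∑ z ∈ Sᶜ, q z
      = (K - 2).choose (c - 1) * ((∑ y, ℓ y) * ∑ z, q z - ∑ y, ℓ y * q y) := by
    conv_lhs => simp only [sum_mul_sum]
    rw [sum_powersetCard_univ_sum_sum_compl hc1, Fintype.card_fin, nsmul_eq_mul, sum_mul,
      ← sum_sub_distrib]
    congr 1
    refine sum_congr rfl fun y _ => ?_
    rw [← mul_sum, ← sum_add_sum_compl {y} q, sum_singleton]
    ring
  symm
  calc _ = ((K - 1).choose c : ℝ)⁻¹ * ((∑ y, ℓ y) * ∑ S ∈ univ.powersetCard c, ∑ z ∈ Sᶜ, q z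
        - ((K : ℝ) - 1) / c * ∑ S ∈ univ.powersetCard c, (∑ y ∈ S, ℓ y) * ∑ z ∈ Sᶜ, q z) := by
        rw [mul_sum, mul_sum, ← sum_sub_distrib, mul_sum]
        exact sum_congr rfl fun S _ => by ring
    _ = ∑ y, ℓ y * q y := by
        rw [hcompl, hmixed]
        field_simp
        linear_combination -((∑ y, ℓ y) * ∑ z, q z - ∑ y, ℓ y * q y) * hbinom

theorem stmt_4 (K : ℕ) (hK : 2 ≤ K) (c : ℕ) (hc1 : 1 ≤ c) (hc2 : c ≤ K - 1)
    (q : Fin K → ℝ) (hq : ∀ y, 0 ≤ q y) (ℓ : Fin K → ℝ) :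
    (∑ y, ℓ y * q y)
      = ∑ S ∈ Finset.univ.powersetCard c,
          ((∑ y, ℓ y) - (((K : ℝ) - 1) / (c : ℝ)) * ∑ y ∈ S, ℓ y) *
            ((((K - 1).choose c : ℝ))⁻¹ * ∑ z ∈ Sᶜ, q z) :=
  stmt_4_general K c hc1 hc2 q ℓ
end

section
/- Let K ≥ 2, Y = {1,...,K}, fix 1 ≤ c ≤ K−1, q : Y → ℝ nonnegative, p̄(S) = (1/C(K−1,c)) · Σ_{y∉S} q(y), and ℓ : Y → ℝ arbitrary. Let L = Σ_{y∈Y} ℓ(y) and let γ ∈ [0,1]. Then Σ_{y∈Y} ℓ(y)·q(y) = Σ_{S:|S|=c} [ (1−γ)·L − ((K−1)/c)·Σ_{y∈S} ℓ(y) ]·p̄(S) + γ·L·(Σ_{y∈Y} q(y)). -/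
/-!
Split each summand into a part proportional to `∑ z ∉ S, q z` and one proportional to
`(∑ y ∈ S, ℓ y) * ∑ z ∉ S, q z`, and average over the `c`-sets `S` by double counting: a label `z`
lies outside `C(K-1, c)` of them, and a pair `y ≠ z` has `y ∈ S`, `z ∉ S` for `C(K-2, c-1)` of
them. The absorption identity `(K-1) C(K-2, c-1) = c C(K-1, c)` then makes the second part equal
to `L ∑ q - ∑ ℓ q`, and everything except `∑ ℓ q` cancels.
-/

open Finset

section SubsetsOfFixedCard

variable {α : Type*} [Fintype α] [DecidableEq α]

theorem card_powersetCard_filter_not_mem (c : ℕ) (z : α) :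
    #{S ∈ (univ : Finset α).powersetCard c | z ∉ S} = (Fintype.card α - 1).choose c := by
  have : {S ∈ (univ : Finset α).powersetCard c | z ∉ S} = (univ.erase z).powersetCard c := by
    ext S
    simp only [mem_filter, mem_powersetCard, subset_erase, subset_univ, true_and]
    tauto
  rw [this, card_powersetCard, card_erase_of_mem (mem_univ z), card_univ]

theorem card_powersetCard_filter_not_mem_pair (c : ℕ) {y z : α} (hyz : y ≠ z) :
    #{S ∈ (univ : Finset α).powersetCard c | y ∉ S ∧ z ∉ S} =
      (Fintype.card α - 2).choose c := by
  have : {S ∈ (univ : Finset α).powersetCard c | y ∉ S ∧ z ∉ S} =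
      ((univ.erase y).erase z).powersetCard c := by
    ext S
    simp only [mem_filter, mem_powersetCard, subset_erase, subset_univ, true_and]
    tauto
  rw [this, card_powersetCard, card_erase_of_mem (by simp [hyz.symm]),
    card_erase_of_mem (mem_univ y), card_univ, Nat.sub_sub]

theorem card_powersetCard_succ_filter_mem_not_mem (c : ℕ) {y z : α} (hyz : y ≠ z) :
    #{S ∈ (univ : Finset α).powersetCard (c + 1) | y ∈ S ∧ z ∉ S} =
      (Fintype.card α - 2).choose c := by
  have h2 : 2 ≤ Fintype.card α := by
    simpa [card_pair hyz] using card_le_univ {y, z}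
  have hsplit := card_filter_add_card_filter_not
    (s := {S ∈ (univ : Finset α).powersetCard (c + 1) | z ∉ S}) (fun S => y ∈ S)
  simp only [filter_filter, and_comm (a := z ∉ _), card_powersetCard_filter_not_mem,
    card_powersetCard_filter_not_mem_pair (c + 1) hyz] at hsplit
  rw [show Fintype.card α - 1 = Fintype.card α - 2 + 1 by omega, Nat.choose_succ_succ'] at hsplit
  omega

variable {R : Type*} [CommRing R]

theorem sum_compl_eq_sum_ite (S : Finset α) (g : α → R) :
    ∑ z ∈ Sᶜ, g z = ∑ z, if z ∉ S then g z else 0 := by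
  simp only [← Fintype.sum_ite_mem Sᶜ g, mem_compl]

theorem sum_powersetCard_sum_compl (c : ℕ) (g : α → R) :
    ∑ S ∈ (univ : Finset α).powersetCard c, ∑ z ∈ Sᶜ, g z =
      (Fintype.card α - 1).choose c * ∑ z, g z := by
  simp only [sum_compl_eq_sum_ite]
  rw [sum_comm, mul_sum]
  refine sum_congr rfl fun z _ => ?_
  rw [← sum_filter, sum_const, card_powersetCard_filter_not_mem, nsmul_eq_mul]

theorem sum_mul_sum_compl_eq_sum_ite (S : Finset α) (f g : α → R) :
    (∑ y ∈ S, f y) * (∑ z ∈ Sᶜ, g z) = ∑ y, ∑ z, if y ∈ S ∧ z ∉ S then f y * g z else 0 := by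
  simp only [← Fintype.sum_ite_mem S f, ← Fintype.sum_ite_mem Sᶜ g, sum_mul_sum, mem_compl,
    ite_zero_mul_ite_zero]

theorem sum_sum_ite_eq_zero_mul (f g : α → R) :
    ∑ y, ∑ z, (if y = z then 0 else f y * g z) = (∑ y, f y) * (∑ z, g z) - ∑ y, f y * g y := by
  have (y z : α) :
      (if y = z then 0 else f y * g z) = f y * g z - if y = z then f y * g z else 0 := by
    split_ifs <;> simp_all
  rw [sum_mul_sum]
  simp only [this, sum_sub_distrib, sum_ite_eq, mem_univ, if_true]

theorem sum_powersetCard_succ_sum_mul_sum_compl (c : ℕ) (f g : α → R) :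
    ∑ S ∈ (univ : Finset α).powersetCard (c + 1), (∑ y ∈ S, f y) * (∑ z ∈ Sᶜ, g z) =
      (Fintype.card α - 2).choose c * ((∑ y, f y) * (∑ z, g z) - ∑ y, f y * g y) := by
  have hcount (y z : α) :
      ∑ S ∈ (univ : Finset α).powersetCard (c + 1),
          (if y ∈ S ∧ z ∉ S then f y * g z else 0) =
        (Fintype.card α - 2).choose c * if y = z then 0 else f y * g z := by
    rw [← sum_filter, sum_const, nsmul_eq_mul]
    split_ifs with hyz
    · simp [hyz]
    · rw [card_powersetCard_succ_filter_mem_not_mem c hyz]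
  simp only [sum_mul_sum_compl_eq_sum_ite]
  rw [sum_comm]
  simp only [sum_comm (s := (univ : Finset α).powersetCard (c + 1)), hcount, ← mul_sum,
    sum_sum_ite_eq_zero_mul]

end SubsetsOfFixedCard

theorem stmt_6_general (K : ℕ) (c : ℕ) (hc1 : 1 ≤ c) (hc2 : c ≤ K - 1)
    (q : Fin K → ℝ) (ℓ : Fin K → ℝ)
    (γ : ℝ) :
    (∑ y, ℓ y * q y)
      = (∑ S ∈ Finset.univ.powersetCard c,
          ((1 - γ) * (∑ y, ℓ y) - (((K : ℝ) - 1) / (c : ℝ)) * ∑ y ∈ S, ℓ y) *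
            ((((K - 1).choose c : ℝ))⁻¹ * ∑ z ∈ Sᶜ, q z))
        + γ * (∑ y, ℓ y) * (∑ y, q y) := by
  obtain ⟨k, rfl⟩ : ∃ k, c = k + 1 := ⟨c - 1, by omega⟩
  have hN : ((K - 1).choose (k + 1) : ℝ) ≠ 0 := by exact_mod_cast (Nat.choose_pos hc2).ne'
  have habsorb : ((K : ℝ) - 1) * (K - 2).choose k = (k + 1) * (K - 1).choose (k + 1) := by
    have h := Nat.add_one_mul_choose_eq (K - 2) k
    rw [show K - 2 + 1 = K - 1 by omega] at h
    rw [show (K : ℝ) - 1 = ((K - 1 : ℕ) : ℝ) by push_cast [show 1 ≤ K by omega]; ring]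
    exact_mod_cast h.trans (mul_comm _ _)
  set L := ∑ y, ℓ y
  have hsummand (S : Finset (Fin K)) :
      ((1 - γ) * L - (((K : ℝ) - 1) / ((k + 1 : ℕ) : ℝ)) * ∑ y ∈ S, ℓ y) *
          ((((K - 1).choose (k + 1) : ℝ))⁻¹ * ∑ z ∈ Sᶜ, q z) =
        (1 - γ) * L * ((K - 1).choose (k + 1) : ℝ)⁻¹ * ∑ z ∈ Sᶜ, q z -
          ((K : ℝ) - 1) / ((k + 1 : ℕ) : ℝ) * ((K - 1).choose (k + 1) : ℝ)⁻¹ *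
            ((∑ y ∈ S, ℓ y) * ∑ z ∈ Sᶜ, q z) := by
    ring
  rw [sum_congr rfl fun S _ => hsummand S, sum_sub_distrib, ← mul_sum, ← mul_sum,
    sum_powersetCard_sum_compl, sum_powersetCard_succ_sum_mul_sum_compl]
  simp only [Fintype.card_fin]
  push_cast
  field_simp
  linear_combination (L * ∑ y, q y - ∑ y, ℓ y * q y) * habsorb

theorem stmt_6 (K : ℕ) (hK : 2 ≤ K) (c : ℕ) (hc1 : 1 ≤ c) (hc2 : c ≤ K - 1)
    (q : Fin K → ℝ) (hq : ∀ y, 0 ≤ q y) (ℓ : Fin K → ℝ)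
    (γ : ℝ) (hγ0 : 0 ≤ γ) (hγ1 : γ ≤ 1) :
    (∑ y, ℓ y * q y)
      = (∑ S ∈ Finset.univ.powersetCard c,
          ((1 - γ) * (∑ y, ℓ y) - (((K : ℝ) - 1) / (c : ℝ)) * ∑ y ∈ S, ℓ y) *
            ((((K - 1).choose c : ℝ))⁻¹ * ∑ z ∈ Sᶜ, q z))
        + γ * (∑ y, ℓ y) * (∑ y, q y) :=
  stmt_6_general K c hc1 hc2 q ℓ γ
end

section
/- Let K ≥ 2, Y = {1,...,K}, q : Y → ℝ nonnegative, and let π₁,...,π_{K−1} ≥ 0 with Σ_c π_c = 1 be class priors over the size of the complementary-label set. Define p̄(S) = π_{|S|} · (1/C(K−1,|S|)) · Σ_{y∉S} q(y) for each nonempty proper subset S ⊆ Y with 1 ≤ |S| ≤ K−1. Then for every y ∈ Y: Σ_{S : y∈S} p̄(S) = ((Σ_c c·π_c)/(K−1)) · Σ_{ŷ≠y} q(ŷ), where the left sum ranges over all S with 1 ≤ |S| ≤ K−1 containing y. -/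
open Finset

lemma count_aux (K c : ℕ) (hc : 1 ≤ c) (y z : Fin K) (hyz : z ≠ y) :
    ((Finset.powersetCard c (Finset.univ : Finset (Fin K))).filter
      (fun S => y ∈ S ∧ z ∉ S)).card = (K - 2).choose (c - 1) := by
  have hkey : ((Finset.powersetCard c (Finset.univ : Finset (Fin K))).filter
      (fun S => y ∈ S ∧ z ∉ S)).card
      = (Finset.powersetCard (c - 1) (((Finset.univ : Finset (Fin K)).erase y).erase z)).card := by
    refine Finset.card_bij' (fun S _ => S.erase y) (fun T _ => insert y T) ?hi ?hj ?li ?ri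
    case hi =>
      intro S hS
      simp only [Finset.mem_filter, Finset.mem_powersetCard_univ] at hS
      obtain ⟨hcard, hy, hz⟩ := hS
      rw [Finset.mem_powersetCard]
      constructor
      · intro w hw
        simp only [Finset.mem_erase] at hw ⊢
        exact ⟨fun h => hz (h ▸ hw.2), hw.1, Finset.mem_univ w⟩
      · rw [Finset.card_erase_of_mem hy, hcard]
    case hj =>
      intro T hT
      rw [Finset.mem_powersetCard] at hT
      obtain ⟨hsub, hcard⟩ := hT
      have hyT : y ∉ T := fun h => by
        have := hsub h
        simp at this
      have hzT : z ∉ T := fun h => by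
        have := hsub h
        simp [Finset.mem_erase] at this
      simp only [Finset.mem_filter, Finset.mem_powersetCard_univ]
      refine ⟨?_, Finset.mem_insert_self y T, ?_⟩
      · rw [Finset.card_insert_of_notMem hyT, hcard]
        omega
      · simp only [Finset.mem_insert]
        rintro (h | h)
        · exact hyz h
        · exact hzT h
    case li =>
      intro S hS
      simp only [Finset.mem_filter] at hS
      exact Finset.insert_erase hS.2.1
    case ri =>
      intro T hT
      rw [Finset.mem_powersetCard] at hT
      have hyT : y ∉ T := fun h => by
        have := hT.1 h
        simp at this
      exact Finset.erase_insert hyT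
  rw [hkey, Finset.card_powersetCard]
  congr 1
  have hz' : z ∈ (Finset.univ : Finset (Fin K)).erase y := by
    simp [hyz]
  rw [Finset.card_erase_of_mem hz', Finset.card_erase_of_mem (Finset.mem_univ y),
    Finset.card_univ, Fintype.card_fin]
  omega

theorem stmt_9 (K : ℕ) (hK : 2 ≤ K) (q : Fin K → ℝ) (hq : ∀ y, 0 ≤ q y)
    (π : ℕ → ℝ) (hπ : ∀ c ∈ Finset.Icc 1 (K - 1), 0 ≤ π c)
    (hπsum : ∑ c ∈ Finset.Icc 1 (K - 1), π c = 1) (y : Fin K) :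
    (∑ S ∈ Finset.univ.powerset.filter
        (fun S : Finset (Fin K) => 1 ≤ S.card ∧ S.card ≤ K - 1 ∧ y ∈ S),
        π S.card * (((K - 1).choose S.card : ℝ))⁻¹ * ∑ z ∈ Sᶜ, q z)
      = ((∑ c ∈ Finset.Icc 1 (K - 1), (c : ℝ) * π c) / ((K : ℝ) - 1)) *
          ∑ z ∈ Finset.univ.erase y, q z := by
  classical
  set F := Finset.univ.powerset.filter
      (fun S : Finset (Fin K) => 1 ≤ S.card ∧ S.card ≤ K - 1 ∧ y ∈ S) with hF
  set a : Finset (Fin K) → ℝ := fun S => π S.card * (((K - 1).choose S.card : ℝ))⁻¹ with ha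
  have step1 : ∀ S : Finset (Fin K), ∑ z ∈ Sᶜ, q z
      = ∑ z ∈ Finset.univ, if z ∈ S then 0 else q z := by
    intro S
    rw [Finset.sum_ite, Finset.sum_const_zero, zero_add]
    congr 1
    ext w
    simp
  have hLHS : (∑ S ∈ F, a S * ∑ z ∈ Sᶜ, q z)
      = ∑ z ∈ Finset.univ, ∑ S ∈ F, (if z ∈ S then 0 else a S * q z) := by
    rw [Finset.sum_comm]
    apply Finset.sum_congr rfl
    intro S _
    rw [step1, Finset.mul_sum]
    apply Finset.sum_congr rfl
    intro z _
    split <;> simp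
  have hyzero : ∀ z ∈ (Finset.univ : Finset (Fin K)), z ∉ Finset.univ.erase y →
      (∑ S ∈ F, (if z ∈ S then 0 else a S * q z)) = 0 := by
    intro z _ hz
    have hzy : z = y := by
      simp only [Finset.mem_erase, Finset.mem_univ, and_true] at hz
      exact not_not.mp hz
    apply Finset.sum_eq_zero
    intro S hS
    simp only [hF, Finset.mem_filter] at hS
    have : z ∈ S := hzy ▸ hS.2.2.2
    simp [this]
  have key : ∀ z : Fin K, z ≠ y →
      (∑ S ∈ F.filter (fun S => z ∉ S), a S)
        = (∑ c ∈ Finset.Icc 1 (K - 1), (c : ℝ) * π c) / ((K : ℝ) - 1) := by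
    intro z hzy
    have hmaps : ∀ S ∈ F.filter (fun S => z ∉ S), S.card ∈ Finset.Icc 1 (K - 1) := by
      intro S hS
      simp only [hF, Finset.mem_filter] at hS
      simp [Finset.mem_Icc, hS.1.2.1, hS.1.2.2.1]
    rw [← Finset.sum_fiberwise_of_maps_to hmaps a]
    rw [Finset.sum_div]
    apply Finset.sum_congr rfl
    intro c hc
    rw [Finset.mem_Icc] at hc
    have hfiber : (F.filter (fun S => z ∉ S)).filter (fun S => S.card = c)
        = (Finset.powersetCard c (Finset.univ : Finset (Fin K))).filter
            (fun S => y ∈ S ∧ z ∉ S) := by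
      ext S
      simp only [hF, Finset.mem_filter, Finset.mem_powerset, Finset.subset_univ, true_and,
        Finset.mem_powersetCard_univ]
      constructor
      · rintro ⟨⟨⟨h1, h2, h3⟩, h4⟩, h5⟩
        exact ⟨h5, h3, h4⟩
      · rintro ⟨h1, h2, h3⟩
        exact ⟨⟨⟨by omega, by omega, h2⟩, h3⟩, h1⟩
    have hconst : ∀ S ∈ (F.filter (fun S => z ∉ S)).filter (fun S => S.card = c),
        a S = π c * (((K - 1).choose c : ℝ))⁻¹ := by
      intro S hS
      simp only [Finset.mem_filter] at hS
      rw [ha]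
      simp [hS.2]
    rw [Finset.sum_congr rfl hconst, Finset.sum_const, hfiber, count_aux K c hc.1 y z hzy,
      nsmul_eq_mul]
    have hch : (K - 1) * (K - 2).choose (c - 1) = c * (K - 1).choose c := by
      have h0 := Nat.add_one_mul_choose_eq (K - 2) (c - 1)
      have h1 : K - 2 + 1 = K - 1 := by omega
      have h2 : c - 1 + 1 = c := by omega
      simp only [Nat.succ_eq_add_one, h1, h2] at h0
      rw [h0, Nat.mul_comm]
    have hne : (((K - 1).choose c : ℕ) : ℝ) ≠ 0 := by
      exact_mod_cast (Nat.choose_pos hc.2).ne'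
    have hKcast : (((K - 1 : ℕ)) : ℝ) = ((K : ℝ) - 1) := by
      push_cast [Nat.cast_sub (by omega : 1 ≤ K)]
      ring
    have hKne : ((K : ℝ) - 1) ≠ 0 := by
      rw [← hKcast]
      exact_mod_cast (by omega : K - 1 ≠ 0)
    have hchR : (((K - 1 : ℕ)) : ℝ) * (((K - 2).choose (c - 1) : ℕ) : ℝ)
        = (c : ℝ) * (((K - 1).choose c : ℕ) : ℝ) := by exact_mod_cast hch
    rw [hKcast] at hchR
    field_simp
    linear_combination π c * hchR
  calc (∑ S ∈ F, a S * ∑ z ∈ Sᶜ, q z)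
      = ∑ z ∈ Finset.univ, ∑ S ∈ F, (if z ∈ S then 0 else a S * q z) := hLHS
    _ = ∑ z ∈ Finset.univ.erase y, ∑ S ∈ F, (if z ∈ S then 0 else a S * q z) :=
        (Finset.sum_subset (Finset.erase_subset y Finset.univ) hyzero).symm
    _ = ∑ z ∈ Finset.univ.erase y,
          ((∑ c ∈ Finset.Icc 1 (K - 1), (c : ℝ) * π c) / ((K : ℝ) - 1)) * q z := by
        apply Finset.sum_congr rfl
        intro z hz
        have hzy : z ≠ y := (Finset.mem_erase.mp hz).1
        have hsplit : (∑ S ∈ F, (if z ∈ S then 0 else a S * q z))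
            = (∑ S ∈ F.filter (fun S => z ∉ S), a S) * q z := by
          rw [Finset.sum_mul, Finset.sum_filter (fun S => z ∉ S) (fun S => a S * q z)]
          apply Finset.sum_congr rfl
          intro S _
          by_cases h : z ∈ S <;> simp [h]
        rw [hsplit, key z hzy]
    _ = ((∑ c ∈ Finset.Icc 1 (K - 1), (c : ℝ) * π c) / ((K : ℝ) - 1)) *
          ∑ z ∈ Finset.univ.erase y, q z := by rw [Finset.mul_sum]
end

section
/- Let K ≥ 2, Y = {1,...,K}, q : Y → ℝ nonnegative, π₁,...,π_{K−1} ≥ 0 with Σ_c π_c = 1 and Σ_c c·π_c > 0, and p̄(S) = π_{|S|}·(1/C(K−1,|S|))·Σ_{y∉S} q(y) for 1 ≤ |S| ≤ K−1. Set λ = (K−1)/(Σ_c c·π_c). Then for any ℓ : Y → ℝ: Σ_{y∈Y} ℓ(y)·q(y) = Σ_{S : 1≤|S|≤K−1} [ Σ_{y∈Y} ℓ(y) − λ·Σ_{y∈S} ℓ(y) ]·p̄(S). -/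
open Finset

lemma cnt1 {K c : ℕ} (z : Fin K) :
    ((Finset.univ.powersetCard c).filter (fun S => z ∉ S)).card = (K-1).choose c := by
  have h : ((Finset.univ.powersetCard c).filter (fun S => z ∉ S))
      = ({z}ᶜ : Finset (Fin K)).powersetCard c := by
    ext S
    simp only [mem_filter, mem_powersetCard, subset_univ, true_and]
    constructor
    · rintro ⟨hc, hz⟩
      exact ⟨fun w hw => Finset.mem_compl.2 (by simp; rintro rfl; exact hz hw), hc⟩
    · rintro ⟨hs, hc⟩
      exact ⟨hc, fun hz => by have := hs hz; simp at this⟩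
  rw [h, Finset.card_powersetCard, card_compl, Finset.card_singleton, Fintype.card_fin]

lemma cnt2 {K c : ℕ} (hc : 1 ≤ c) {y z : Fin K} (hyz : y ≠ z) :
    ((Finset.univ.powersetCard c).filter (fun S => y ∈ S ∧ z ∉ S)).card
      = (K-2).choose (c-1) := by
  have h2 : (({y, z}ᶜ : Finset (Fin K)).powersetCard (c-1)).card = (K-2).choose (c-1) := by
    rw [Finset.card_powersetCard, card_compl, Fintype.card_fin,
      Finset.card_insert_of_notMem (by simp [hyz]), Finset.card_singleton]
  rw [← h2]
  apply Finset.card_bij (fun S _ => S.erase y)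
  · rintro S hS
    simp only [mem_filter, mem_powersetCard, subset_univ, true_and] at hS
    obtain ⟨hc', hy, hz⟩ := hS
    simp only [mem_powersetCard]
    refine ⟨fun w hw => ?_, ?_⟩
    · simp only [Finset.mem_erase] at hw
      simp only [Finset.mem_compl, Finset.mem_insert, Finset.mem_singleton]
      push_neg
      exact ⟨hw.1, fun h => hz (h ▸ hw.2)⟩
    · rw [Finset.card_erase_of_mem hy, hc']
  · rintro S hS T hT h
    simp only [mem_filter, mem_powersetCard] at hS hT
    rw [← Finset.insert_erase hS.2.1, ← Finset.insert_erase hT.2.1, h]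
  · rintro T hT
    simp only [mem_powersetCard] at hT
    obtain ⟨hsub, hcard⟩ := hT
    have hyT : y ∉ T := fun h => by have := hsub h; simp at this
    have hzT : z ∉ T := fun h => by have := hsub h; simp at this
    refine ⟨insert y T, ?_, ?_⟩
    · simp only [mem_filter, mem_powersetCard, subset_univ, true_and]
      refine ⟨?_, Finset.mem_insert_self _ _, ?_⟩
      · rw [Finset.card_insert_of_notMem hyT, hcard]
        omega
      · simp only [Finset.mem_insert]
        push_neg
        exact ⟨fun h => hyz h.symm, hzT⟩
    · rw [Finset.erase_insert hyT]

theorem stmt_10 (K : ℕ) (hK : 2 ≤ K) (q : Fin K → ℝ) (hq : ∀ y, 0 ≤ q y)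
    (π : ℕ → ℝ) (hπ : ∀ c ∈ Finset.Icc 1 (K - 1), 0 ≤ π c)
    (hπsum : ∑ c ∈ Finset.Icc 1 (K - 1), π c = 1)
    (hπpos : 0 < ∑ c ∈ Finset.Icc 1 (K - 1), (c : ℝ) * π c)
    (ℓ : Fin K → ℝ) :
    (∑ y, ℓ y * q y)
      = ∑ S ∈ Finset.univ.powerset.filter
          (fun S : Finset (Fin K) => 1 ≤ S.card ∧ S.card ≤ K - 1),
          ((∑ y, ℓ y)
            - (((K : ℝ) - 1) / (∑ c ∈ Finset.Icc 1 (K - 1), (c : ℝ) * π c)) *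
                ∑ y ∈ S, ℓ y) *
            (π S.card * (((K - 1).choose S.card : ℝ))⁻¹ * ∑ z ∈ Sᶜ, q z) := by
  classical
  set M : ℝ := ∑ c ∈ Finset.Icc 1 (K - 1), (c : ℝ) * π c with hM
  set lam : ℝ := ((K : ℝ) - 1) / M with hlam
  set L : ℝ := ∑ y, ℓ y with hL
  set Q : ℝ := ∑ z, q z with hQ
  set D : ℝ := ∑ y, ℓ y * q y with hD
  have hMne : M ≠ 0 := ne_of_gt hπpos
  have hkk : ((K:ℝ) - 1) ≠ 0 := by
    have : (2:ℝ) ≤ (K:ℝ) := by exact_mod_cast hK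
    linarith
  -- group by cardinality
  have hgroup :
      ∑ S ∈ Finset.univ.powerset.filter
          (fun S : Finset (Fin K) => 1 ≤ S.card ∧ S.card ≤ K - 1),
          (L - lam * ∑ y ∈ S, ℓ y) *
            (π S.card * (((K - 1).choose S.card : ℝ))⁻¹ * ∑ z ∈ Sᶜ, q z)
        = ∑ c ∈ Finset.Icc 1 (K-1), ∑ S ∈ Finset.univ.powersetCard c,
            (L - lam * ∑ y ∈ S, ℓ y) *
              (π c * (((K - 1).choose c : ℝ))⁻¹ * ∑ z ∈ Sᶜ, q z) := by
    rw [← Finset.sum_fiberwise_of_maps_to (g := Finset.card)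
      (fun S hS => by
        simp only [mem_filter] at hS
        exact Finset.mem_Icc.2 ⟨hS.2.1, hS.2.2⟩)]
    refine Finset.sum_congr rfl fun c hc => ?_
    have hset : ((Finset.univ.powerset.filter
          (fun S : Finset (Fin K) => 1 ≤ S.card ∧ S.card ≤ K - 1)).filter
          (fun S => S.card = c)) = Finset.univ.powersetCard c := by
      simp only [Finset.mem_Icc] at hc
      ext S
      simp only [mem_filter, mem_powerset, mem_powersetCard, subset_univ, true_and]
      constructor
      · rintro ⟨_, h⟩; exact h
      · rintro rfl; exact ⟨⟨hc.1, hc.2⟩, rfl⟩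
    rw [hset]
    refine Finset.sum_congr rfl fun S hS => ?_
    simp only [mem_powersetCard] at hS
    rw [hS.2]
  -- key sums
  have sumA : ∀ c : ℕ, ∑ S ∈ Finset.univ.powersetCard c, ∑ z ∈ Sᶜ, q z
      = ((K-1).choose c : ℝ) * Q := by
    intro c
    have hrw : ∀ S : Finset (Fin K), ∑ z ∈ Sᶜ, q z
        = ∑ z, if z ∈ S then 0 else q z := by
      intro S
      rw [Finset.sum_ite, Finset.sum_const_zero, zero_add]
      congr 1
      ext z; simp [Finset.mem_compl]
    simp_rw [hrw]
    rw [Finset.sum_comm]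
    have : ∀ z : Fin K, ∑ S ∈ Finset.univ.powersetCard c, (if z ∈ S then 0 else q z)
        = ((K-1).choose c : ℝ) * q z := by
      intro z
      rw [Finset.sum_ite, Finset.sum_const_zero, zero_add, Finset.sum_const,
        cnt1 z, nsmul_eq_mul]
    simp_rw [this]
    rw [← Finset.mul_sum]
  have sumB : ∀ c : ℕ, 1 ≤ c →
      ∑ S ∈ Finset.univ.powersetCard c, (∑ y ∈ S, ℓ y) * (∑ z ∈ Sᶜ, q z)
        = ((K-2).choose (c-1) : ℝ) * (L * Q - D) := by
    intro c hc
    have hrw : ∀ S : Finset (Fin K), (∑ y ∈ S, ℓ y) * (∑ z ∈ Sᶜ, q z)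
        = ∑ y, ∑ z, if y ∈ S ∧ z ∉ S then ℓ y * q z else 0 := by
      intro S
      have h1 : ∀ y z : Fin K, (if y ∈ S ∧ z ∉ S then ℓ y * q z else 0)
          = (if y ∈ S then ℓ y else 0) * (if z ∈ Sᶜ then q z else 0) := by
        intro y z
        by_cases hy : y ∈ S <;> by_cases hz : z ∈ S <;>
          simp [hy, hz, Finset.mem_compl]
      simp_rw [h1, ← Finset.sum_mul_sum, Finset.sum_ite_mem, Finset.univ_inter]
    simp_rw [hrw]
    rw [Finset.sum_comm]
    have key : ∀ y : Fin K,
        ∑ S ∈ Finset.univ.powersetCard c, ∑ z, (if y ∈ S ∧ z ∉ S then ℓ y * q z else 0)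
        = ((K-2).choose (c-1) : ℝ) * (ℓ y * Q - ℓ y * q y) := by
      intro y
      rw [Finset.sum_comm]
      have inner : ∀ z : Fin K,
          ∑ S ∈ Finset.univ.powersetCard c, (if y ∈ S ∧ z ∉ S then ℓ y * q z else 0)
          = if y = z then 0 else ((K-2).choose (c-1) : ℝ) * (ℓ y * q z) := by
        intro z
        rw [Finset.sum_ite, Finset.sum_const_zero, add_zero, Finset.sum_const, nsmul_eq_mul]
        by_cases hyz : y = z
        · subst hyz
          have : (Finset.univ.powersetCard c).filter (fun S => y ∈ S ∧ y ∉ S) = ∅ := by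
            ext S; simp
          rw [this]; simp
        · rw [cnt2 hc hyz]; simp [hyz]
      simp_rw [inner]
      have h2 : ∀ z : Fin K, (if y = z then (0:ℝ)
            else ((K-2).choose (c-1) : ℝ) * (ℓ y * q z))
          = ((K-2).choose (c-1) : ℝ) * (ℓ y * q z)
            - (if y = z then ((K-2).choose (c-1) : ℝ) * (ℓ y * q z) else 0) := by
        intro z
        split_ifs with h
        · subst h; ring
        · ring
      simp_rw [h2]
      rw [Finset.sum_sub_distrib, Finset.sum_ite_eq, if_pos (Finset.mem_univ y)]
      have h3 : ∑ z, ((K-2).choose (c-1) : ℝ) * (ℓ y * q z)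
          = ((K-2).choose (c-1) : ℝ) * (ℓ y * Q) := by
        rw [← Finset.mul_sum]
        congr 1
        rw [← Finset.mul_sum]
      rw [h3]; ring
    simp_rw [key]
    rw [← Finset.mul_sum]
    congr 1
    rw [hL, hQ, hD, Finset.sum_sub_distrib, Finset.sum_mul]
  -- per-cardinality simplification
  have hterm : ∀ c ∈ Finset.Icc 1 (K-1),
      ∑ S ∈ Finset.univ.powersetCard c,
        (L - lam * ∑ y ∈ S, ℓ y) *
          (π c * (((K - 1).choose c : ℝ))⁻¹ * ∑ z ∈ Sᶜ, q z)
      = (L * Q) * π c - (lam * (L * Q - D) / ((K:ℝ) - 1)) * ((c:ℝ) * π c) := by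
    intro c hc
    rw [Finset.mem_Icc] at hc
    have hCpos : 0 < (K-1).choose c := Nat.choose_pos hc.2
    have hC : ((K-1).choose c : ℝ) ≠ 0 := Nat.cast_ne_zero.2 hCpos.ne'
    have hidN : (K-1) * (K-2).choose (c-1) = (K-1).choose c * c := by
      have h := Nat.add_one_mul_choose_eq (K-2) (c-1)
      have h1 : K - 2 + 1 = K - 1 := by omega
      have h2 : c - 1 + 1 = c := by omega
      simpa [Nat.succ_eq_add_one, h1, h2] using h
    have hid : ((K:ℝ) - 1) * ((K-2).choose (c-1) : ℝ)
        = ((K-1).choose c : ℝ) * (c:ℝ) := by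
      have hc1 : ((K-1 : ℕ) : ℝ) = (K:ℝ) - 1 := by
        have : 1 ≤ K := by omega
        push_cast [this]
        ring
      rw [← hc1]
      exact_mod_cast congrArg (Nat.cast : ℕ → ℝ) hidN
    have hC' : ((K-2).choose (c-1) : ℝ)
        = ((K-1).choose c : ℝ) * (c:ℝ) / ((K:ℝ) - 1) := by
      field_simp
      linarith [hid]
    have hexp : ∀ S : Finset (Fin K),
        (L - lam * ∑ y ∈ S, ℓ y) *
          (π c * (((K - 1).choose c : ℝ))⁻¹ * ∑ z ∈ Sᶜ, q z)
        = (π c * (((K - 1).choose c : ℝ))⁻¹ * L) * (∑ z ∈ Sᶜ, q z)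
          - (π c * (((K - 1).choose c : ℝ))⁻¹ * lam) *
              ((∑ y ∈ S, ℓ y) * (∑ z ∈ Sᶜ, q z)) := by
      intro S; ring
    simp_rw [hexp]
    rw [Finset.sum_sub_distrib, ← Finset.mul_sum, ← Finset.mul_sum, sumA c, sumB c hc.1,
      hC']
    field_simp
  rw [hgroup, Finset.sum_congr rfl hterm, Finset.sum_sub_distrib, ← Finset.mul_sum,
    ← Finset.mul_sum, hπsum, ← hM, hlam]
  field_simp
  ring
end
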